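/- Let I be an ideal in k[[y]] with diagram N(I) having vertices α¹,…,α^s, and let F₁,…,F_s ∈ I with exp F_i = α^i. Define Δ_i = (α^i + ℕ^n) \ ⋃_{j<i} Δ_j. Then N(I) = ⋃_{i=1}^s Δ_i, and F₁,…,F_s generate I. -/

import Mathlib

open MvPowerSeries

/-- Total-degree-then-lexicographic comparison on multi-indices. -/
def degLexLt {n : ℕ} (a b : Fin n →₀ ℕ) : Prop :=
  toLex ((∑ i, a i : ℕ), toLex a) < toLex ((∑ i, b i : ℕ), toLex b)

/-- `d` is the initial exponent `exp F` of the power series `F`: the minimum of the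
support of `F` in the total-degree-then-lexicographic order. -/
def IsExpOf {K : Type*} [Field K] {n : ℕ}
    (F : MvPowerSeries (Fin n) K) (d : Fin n →₀ ℕ) : Prop :=
  coeff d F ≠ 0 ∧ ∀ e : Fin n →₀ ℕ, coeff e F ≠ 0 → ¬ degLexLt e d

/-- The diagram of initial exponents `N(I) = { exp F : F ∈ I \ {0} }`. -/
def diagramOf {K : Type*} [Field K] {n : ℕ}
    (I : Ideal (MvPowerSeries (Fin n) K)) : Set (Fin n →₀ ℕ) :=
  {d | ∃ F ∈ I, F ≠ 0 ∧ IsExpOf F d}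

/-- The translated cone `a + ℕ^n`. -/
def cone {n : ℕ} (a : Fin n →₀ ℕ) : Set (Fin n →₀ ℕ) :=
  {x | ∃ c : Fin n →₀ ℕ, x = a + c}

/-!
Hironaka division. Since `N(I) = ⋃ᵢ (αᵢ + ℕⁿ)`, the initial term of any nonzero `r ∈ I` can be
cancelled by a monomial multiple of some `Fᵢ`; iterating gives remainders in `I` whose initial
exponents strictly increase in the degree-lexicographic order. That order has finite initial
segments, so every coefficient of the remainders eventually vanishes and every coefficient of the
accumulated quotients eventually stops changing. Hence the quotients converge coefficientwise and
`G = ∑ᵢ Qᵢ Fᵢ`. The description of `N(I)` by the `Δᵢ` is the disjointification of the cones.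
-/

open Filter Topology Finsupp

theorem eq_sum_tsum_mul_of_tendsto_zero {R ι : Type*} [Ring R] [TopologicalSpace R]
    [IsTopologicalRing R] [T2Space R] {s : Finset ι} {r : ℕ → R} {q : ℕ → ι → R} {F : ι → R}
    (htel : ∀ m, r m - r (m + 1) = ∑ i ∈ s, q m i * F i) (hq : ∀ i, Summable fun m => q m i)
    (hr : Tendsto r atTop (𝓝 0)) : r 0 = ∑ i ∈ s, (∑' m, q m i) * F i := by
  have hsum : HasSum (fun m => ∑ i ∈ s, q m i * F i) (∑ i ∈ s, (∑' m, q m i) * F i) :=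
    hasSum_sum fun i _ => (hq i).hasSum.mul_right (F i)
  have hpartial : Tendsto (fun N => ∑ m ∈ Finset.range N, (r m - r (m + 1))) atTop (𝓝 (r 0)) := by
    simpa only [Finset.sum_range_sub', sub_zero] using tendsto_const_nhds.sub hr
  simp only [htel] at hpartial
  exact tendsto_nhds_unique hpartial hsum.tendsto_sum_nat

section PiTopology

open MvPowerSeries.WithPiTopology

variable {σ R : Type*} [Semiring R] [TopologicalSpace R] {f : ℕ → MvPowerSeries σ R}

theorem summable_of_eventually_coeff_eq_zero (h : ∀ d, ∀ᶠ m in atTop, coeff d (f m) = 0) :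
    Summable f :=
  summable_iff_summable_coeff.2 fun d => summable_of_hasFiniteSupport <| by
    rw [← Nat.cofinite_eq_atTop] at h
    exact eventually_cofinite.1 (h d)

theorem tendsto_zero_of_eventually_coeff_eq_zero (h : ∀ d, ∀ᶠ m in atTop, coeff d (f m) = 0) :
    Tendsto f atTop (𝓝 0) :=
  (tendsto_iff_coeff_tendsto _ _ _).2 fun d => by
    rw [map_zero]
    exact tendsto_const_nhds.congr' ((h d).mono fun _ hm => hm.symm)

end PiTopology

section DegLexOrder

variable {n : ℕ}

theorem degLexLt_iff {a b : Fin n →₀ ℕ} : degLexLt a b ↔ toDegLex a < toDegLex b := by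
  simp only [degLexLt, DegLex.lt_def, ofDegLex_toDegLex, degree_eq_sum]

theorem finite_setOf_toDegLex_le (e : Fin n →₀ ℕ) :
    {x : Fin n →₀ ℕ | toDegLex x ≤ toDegLex e}.Finite :=
  (finite_of_degree_le e.degree).subset fun _ hx => DegLex.monotone_degree hx

end DegLexOrder

section InitialExponent

variable {K : Type*} [Field K] {n : ℕ} {r s : MvPowerSeries (Fin n) K} {d e : Fin n →₀ ℕ}

def VanishesUpTo (r : MvPowerSeries (Fin n) K) (d : Fin n →₀ ℕ) : Prop :=
  ∀ e, toDegLex e ≤ toDegLex d → coeff e r = 0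

theorem VanishesUpTo.mono (h : VanishesUpTo r d) (hed : toDegLex e ≤ toDegLex d) :
    VanishesUpTo r e :=
  fun _ hx => h _ (hx.trans hed)

theorem IsExpOf.toDegLex_le (h : IsExpOf r d) (he : coeff e r ≠ 0) : toDegLex d ≤ toDegLex e :=
  not_lt.mp fun hlt => h.2 e he (degLexLt_iff.mpr hlt)

theorem IsExpOf.ne_zero (h : IsExpOf r d) : r ≠ 0 := by
  rintro rfl
  exact h.1 (map_zero _)

theorem IsExpOf.lt_of_vanishesUpTo (h : IsExpOf r d) (hr : VanishesUpTo r e) :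
    toDegLex e < toDegLex d :=
  not_le.mp fun hde => h.1 (hr d hde)

theorem exists_isExpOf (hr : r ≠ 0) : ∃ d, IsExpOf r d := by
  obtain ⟨e, he⟩ : ∃ e, coeff e r ≠ 0 := by
    by_contra! h
    exact hr (MvPowerSeries.ext h)
  obtain ⟨d, hd, hmin⟩ := wellFounded_lt.has_min {x | coeff (ofDegLex x) r ≠ 0} ⟨toDegLex e, he⟩
  exact ⟨ofDegLex d, hd, fun x hx hlt => hmin (toDegLex x) hx (degLexLt_iff.mp hlt)⟩

theorem exists_isExpOf_le_of_not_vanishesUpTo (h : ¬ VanishesUpTo r e) :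
    ∃ d, IsExpOf r d ∧ toDegLex d ≤ toDegLex e := by
  simp only [VanishesUpTo, not_forall] at h
  obtain ⟨x, hxe, hx⟩ := h
  obtain ⟨d, hd⟩ := exists_isExpOf (r := r) fun h0 => hx (by rw [h0, map_zero])
  exact ⟨d, hd, (hd.toDegLex_le hx).trans hxe⟩

theorem IsExpOf.monomial_mul {F : MvPowerSeries (Fin n) K} {α : Fin n →₀ ℕ} (hF : IsExpOf F α)
    (c : Fin n →₀ ℕ) {a : K} (ha : a ≠ 0) : IsExpOf (monomial c a * F) (c + α) := by
  refine ⟨?_, fun e he hlt => ?_⟩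
  · rw [coeff_monomial_mul, if_pos le_self_add, add_tsub_cancel_left]
    exact mul_ne_zero ha hF.1
  · rw [coeff_monomial_mul] at he
    split_ifs at he with hce
    · have := hF.toDegLex_le (right_ne_zero_of_mul he)
      rw [degLexLt_iff, ← add_tsub_cancel_of_le hce, toDegLex_add, toDegLex_add] at hlt
      exact (lt_of_add_lt_add_left hlt).not_ge this
    · exact he rfl

theorem IsExpOf.vanishesUpTo_sub (hr : IsExpOf r d) (hs : IsExpOf s d)
    (h : coeff d r = coeff d s) : VanishesUpTo (r - s) d := by
  intro e he
  rcases he.lt_or_eq with hlt | heq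
  · have hcoeff : ∀ {t : MvPowerSeries (Fin n) K}, IsExpOf t d → coeff e t = 0 :=
      fun ht => by_contra fun hne => (ht.toDegLex_le hne).not_gt hlt
    rw [map_sub, hcoeff hr, hcoeff hs, sub_zero]
  · rw [toDegLex_inj.mp heq, map_sub, h, sub_self]

theorem IsExpOf.unique (h : IsExpOf r d) (h' : IsExpOf r e) : d = e :=
  toDegLex_inj.mp (le_antisymm (h.toDegLex_le h'.1) (h'.toDegLex_le h.1))

theorem eventually_vanishesUpTo (r : ℕ → MvPowerSeries (Fin n) K)
    (hzero : ∀ m, r m = 0 → r (m + 1) = 0)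
    (hstep : ∀ m d, IsExpOf (r m) d → VanishesUpTo (r (m + 1)) d)
    (e : Fin n →₀ ℕ) : ∀ᶠ m in atTop, VanishesUpTo (r m) e := by
  have hpersist : ∀ m, VanishesUpTo (r m) e → VanishesUpTo (r (m + 1)) e := by
    intro m hm
    by_cases h0 : r m = 0
    · simp [VanishesUpTo, hzero m h0]
    · obtain ⟨d, hd⟩ := exists_isExpOf h0
      exact (hstep m d hd).mono (hd.lt_of_vanishesUpTo hm).le
  obtain ⟨m₀, hm₀⟩ : ∃ m, VanishesUpTo (r m) e := by
    by_contra! hnot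
    choose d hd hde using fun m => exists_isExpOf_le_of_not_vanishesUpTo (hnot m)
    have hmono : StrictMono (fun m => toDegLex (d m)) := strictMono_nat_of_lt_succ fun m =>
      (hd (m + 1)).lt_of_vanishesUpTo (hstep m (d m) (hd m))
    exact (finite_setOf_toDegLex_le e).not_infinite
      (Set.infinite_of_injective_forall_mem (toDegLex_injective.comp hmono.injective) hde)
  exact eventually_atTop.2 ⟨m₀, fun m hm => Nat.le_induction hm₀ (fun k _ => hpersist k) m hm⟩

end InitialExponent

section Division

variable {K : Type*} [Field K] {n : ℕ} {ι : Type*} [Fintype ι]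
  {I : Ideal (MvPowerSeries (Fin n) K)} {α : ι → Fin n →₀ ℕ} {F : ι → MvPowerSeries (Fin n) K}

theorem exists_division_step (hN : diagramOf I ⊆ ⋃ i, cone (α i))
    (hFexp : ∀ i, IsExpOf (F i) (α i)) {r : MvPowerSeries (Fin n) K} (hr : r ∈ I) :
    ∃ q : ι → MvPowerSeries (Fin n) K, (∀ i c, coeff c (q i) ≠ 0 → IsExpOf r (α i + c)) ∧
      ∀ d, IsExpOf r d → VanishesUpTo (r - ∑ i, q i * F i) d := by
  classical
  by_cases hr0 : r = 0
  · exact ⟨0, fun i c hc => absurd (map_zero _) hc, fun d hd => absurd hr0 hd.ne_zero⟩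
  obtain ⟨d, hd⟩ := exists_isExpOf hr0
  obtain ⟨i, c, rfl⟩ := Set.mem_iUnion.mp (hN ⟨r, hr, hr0, hd⟩)
  set a := coeff (α i + c) r / coeff (α i) (F i)
  have hlead : IsExpOf (monomial c a * F i) (α i + c) := by
    rw [add_comm]
    exact (hFexp i).monomial_mul c (div_ne_zero hd.1 (hFexp i).1)
  obtain ⟨q, hq⟩ : ∃ q : ι → MvPowerSeries (Fin n) K, q = Pi.single i (monomial c a) := ⟨_, rfl⟩
  refine ⟨q, fun j c' hc' => ?_, fun d' hd' => ?_⟩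
  · obtain rfl : j = i := by
      by_contra hji
      simp [hq, Pi.single_eq_of_ne hji] at hc'
    obtain rfl : c' = c := by
      by_contra hc
      simp [hq, coeff_monomial, hc] at hc'
    exact hd
  · obtain rfl := hd.unique hd'
    have hsingle : ∑ j, q j * F j = monomial c a * F i := by
      rw [Finset.sum_eq_single i (fun j _ hji => by simp [hq, Pi.single_eq_of_ne hji])
        (fun h => absurd (Finset.mem_univ i) h), hq, Pi.single_eq_same]
    rw [hsingle]
    refine hd.vanishesUpTo_sub hlead ?_
    rw [coeff_monomial_mul, if_pos le_add_self, add_tsub_cancel_right,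
      div_mul_cancel₀ _ (hFexp i).1]

theorem exists_division_sequence (hN : diagramOf I ⊆ ⋃ i, cone (α i))
    (hFexp : ∀ i, IsExpOf (F i) (α i)) (hFI : ∀ i, F i ∈ I) {G : MvPowerSeries (Fin n) K}
    (hG : G ∈ I) :
    ∃ (r : ℕ → MvPowerSeries (Fin n) K) (q : ℕ → ι → MvPowerSeries (Fin n) K), r 0 = G ∧
      (∀ m, r m - r (m + 1) = ∑ i, q m i * F i) ∧
      (∀ m i c, coeff c (q m i) ≠ 0 → IsExpOf (r m) (α i + c)) ∧
      ∀ m d, IsExpOf (r m) d → VanishesUpTo (r (m + 1)) d := by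
  choose! q hq_supp hq_step using fun r (hr : r ∈ I) => exists_division_step hN hFexp hr
  set next : MvPowerSeries (Fin n) K → MvPowerSeries (Fin n) K := fun r => r - ∑ i, q r i * F i
  have hnext : ∀ m, next^[m + 1] G = next (next^[m] G) := fun m =>
    Function.iterate_succ_apply' next m G
  have hmem : ∀ m, next^[m] G ∈ I := by
    intro m
    induction m with
    | zero => exact hG
    | succ m ih =>
      rw [hnext]
      exact I.sub_mem ih (I.sum_mem fun i _ => I.mul_mem_left _ (hFI i))
  refine ⟨fun m => next^[m] G, fun m => q (next^[m] G), rfl, fun m => ?_,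
    fun m => hq_supp _ (hmem m), fun m => by simpa only [hnext] using hq_step _ (hmem m)⟩
  change next^[m] G - next^[m + 1] G = _
  rw [hnext, sub_sub_cancel]

open MvPowerSeries.WithPiTopology in
theorem mem_span_range_of_diagramOf_subset (hN : diagramOf I ⊆ ⋃ i, cone (α i))
    (hFexp : ∀ i, IsExpOf (F i) (α i)) (hFI : ∀ i, F i ∈ I) {G : MvPowerSeries (Fin n) K}
    (hG : G ∈ I) : G ∈ Ideal.span (Set.range F) := by
  let _ : TopologicalSpace K := ⊥
  have _ : DiscreteTopology K := ⟨rfl⟩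
  obtain ⟨r, q, rfl, htel, hq, hstep⟩ := exists_division_sequence hN hFexp hFI hG
  have hq_zero : ∀ m, r m = 0 → ∀ i, q m i = 0 := fun m h0 i =>
    MvPowerSeries.ext fun c => by_contra fun hc => (hq m i c hc).ne_zero h0
  have hzero : ∀ m, r m = 0 → r (m + 1) = 0 := fun m h0 => by
    simpa [h0, hq_zero m h0] using htel m
  have hvan := eventually_vanishesUpTo r hzero hstep
  have hq_ev : ∀ i c, ∀ᶠ m in atTop, coeff c (q m i) = 0 := fun i c =>
    (hvan (α i + c)).mono fun m hm =>
      by_contra fun hc => ((hq m i c hc).lt_of_vanishesUpTo hm).false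
  have hr_ev : ∀ e, ∀ᶠ m in atTop, coeff e (r m) = 0 := fun e =>
    (hvan e).mono fun m hm => hm e le_rfl
  rw [eq_sum_tsum_mul_of_tendsto_zero htel
    (fun i => summable_of_eventually_coeff_eq_zero (hq_ev i))
    (tendsto_zero_of_eventually_coeff_eq_zero hr_ev)]
  exact Ideal.sum_mem _ fun i _ => Ideal.mul_mem_left _ _ (Ideal.subset_span ⟨i, rfl⟩)

end Division

theorem statement12_general {K : Type*} [Field K] {n s : ℕ}
    (I : Ideal (MvPowerSeries (Fin n) K))
    (α : Fin s → (Fin n →₀ ℕ))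
    (hαgen : diagramOf I = ⋃ i : Fin s, cone (α i))
    (F : Fin s → MvPowerSeries (Fin n) K)
    (hFI : ∀ i, F i ∈ I) (hFexp : ∀ i, IsExpOf (F i) (α i))
    (Δi : Fin s → Set (Fin n →₀ ℕ))
    (hΔi : ∀ i, Δi i = cone (α i) \ ⋃ j : Fin s, ⋃ _ : j < i, cone (α j)) :
    diagramOf I = (⋃ i : Fin s, Δi i) ∧ I = Ideal.span (Set.range F) := by
  have hΔ : Δi = disjointed fun i => cone (α i) := funext fun i => by
    simp only [hΔi, disjointed_eq_inter_compl, Set.sdiff_eq, Set.compl_iUnion]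
  refine ⟨by rw [hαgen, hΔ, iUnion_disjointed], le_antisymm (fun G hG => ?_) ?_⟩
  · exact mem_span_range_of_diagramOf_subset hαgen.subset hFexp hFI hG
  · exact Ideal.span_le.2 (Set.range_subset_iff.2 hFI)

/-- Let `I` be an ideal in `k[[y]]` with diagram `N(I)` having
vertices `α¹,…,α^s` (the minimal finite set with `N(I) = {α¹,…,α^s} + ℕ^n`), and let
`F₁,…,F_s ∈ I` with `exp F_i = α^i`.  With `Δ_i = (α^i + ℕ^n) \ ⋃_{j<i} Δ_j`
(equivalently `(α^i + ℕ^n) \ ⋃_{j<i} (α^j + ℕ^n)`), one has `N(I) = ⋃_{i=1}^s Δ_i`,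
and `F₁,…,F_s` generate `I`. -/
theorem statement12 {K : Type*} [Field K] {n s : ℕ}
    (I : Ideal (MvPowerSeries (Fin n) K))
    (α : Fin s → (Fin n →₀ ℕ))
    (hαmem : ∀ i, α i ∈ diagramOf I)
    (hαgen : diagramOf I = ⋃ i : Fin s, cone (α i))
    (hαmin : ∀ B : Finset (Fin n →₀ ℕ), ↑B ⊆ diagramOf I →
      diagramOf I = {x | ∃ b ∈ B, ∃ c : Fin n →₀ ℕ, x = b + c} → ∀ i, α i ∈ B)
    (F : Fin s → MvPowerSeries (Fin n) K)
    (hFI : ∀ i, F i ∈ I) (hFexp : ∀ i, IsExpOf (F i) (α i))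
    (Δi : Fin s → Set (Fin n →₀ ℕ))
    (hΔi : ∀ i, Δi i = cone (α i) \ ⋃ j : Fin s, ⋃ _ : j < i, cone (α j)) :
    diagramOf I = (⋃ i : Fin s, Δi i) ∧ I = Ideal.span (Set.range F) :=
  statement12_general I α hαgen F hFI hFexp Δi hΔi
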